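/- arXiv:2207.09262 — 2 statements merged into one kernel-verified Lean document; each statement's English description precedes it below -/
import Mathlib

section
/- Let k ≥ 5 and let G be a k-connected almost-chordal graph. Then there is no minimal separator S of G and induced 4-cycle C of G such that S contains three (or more) vertices of C. -/
open SimpleGraph

variable {V : Type*}

/-- `f : ZMod n → V` enumerates the vertices of an induced (chordless) cycle of length `n`:
it is injective and two listed vertices are adjacent iff they are consecutive on the cycle. -/
def IsInducedCycle (G : SimpleGraph V) {n : ℕ} (f : ZMod n → V) : Prop :=
  Function.Injective f ∧
    ∀ i j : ZMod n, G.Adj (f i) (f j) ↔ (j = i + 1 ∨ i = j + 1)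

/-- A graph is chordal if it has no induced cycle of length at least 4. -/
def Chordal (G : SimpleGraph V) : Prop :=
  ∀ n : ℕ, 4 ≤ n → ∀ f : ZMod n → V, ¬ IsInducedCycle G f

/-- A hole is an induced chordless cycle of length at least 5. -/
def HasHole (G : SimpleGraph V) : Prop :=
  ∃ (n : ℕ) (f : ZMod n → V), 5 ≤ n ∧ IsInducedCycle G f

/-- A house: an induced 4-cycle together with a fifth vertex adjacent to exactly two
adjacent vertices of the 4-cycle (as an induced subgraph). -/
def HasHouse (G : SimpleGraph V) : Prop :=
  ∃ (f : ZMod 4 → V) (e : V), IsInducedCycle G f ∧ (∀ i, e ≠ f i) ∧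
    G.Adj e (f 0) ∧ G.Adj e (f 1) ∧ ¬ G.Adj e (f 2) ∧ ¬ G.Adj e (f 3)

/-- `s` is the vertex set of an induced 4-cycle of `G`. -/
def IsC4Set (G : SimpleGraph V) (s : Set V) : Prop :=
  ∃ f : ZMod 4 → V, IsInducedCycle G f ∧ s = Set.range f

/-- Almost-chordal: no hole, no induced house, and any two distinct induced 4-cycles
share at most one vertex. -/
def AlmostChordal (G : SimpleGraph V) : Prop :=
  ¬ HasHole G ∧ ¬ HasHouse G ∧
    ∀ s t : Set V, IsC4Set G s → IsC4Set G t → s ≠ t → (s ∩ t).Subsingleton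

/-- `G` is `k`-connected: more than `k` vertices, and removing fewer than `k` vertices
leaves it connected. -/
def KConnected {W : Type*} [Fintype W] (k : ℕ) (G : SimpleGraph W) : Prop :=
  k < Fintype.card W ∧
    ∀ S : Finset W, S.card < k → (G.induce ((↑S : Set W)ᶜ)).Connected

/-- The contraction `G/uv`: `v` is removed and merged into `u`, whose new neighbourhood is
`(N(u) ∪ N(v)) \ {u, v}`. -/
def contractEdge (G : SimpleGraph V) (u v : V) : SimpleGraph {x : V // x ≠ v} :=
  SimpleGraph.fromRel fun a b =>
    G.Adj a.1 b.1 ∨ (a.1 = u ∧ G.Adj v b.1) ∨ (b.1 = u ∧ G.Adj v a.1)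

/-- `S` is a separator: its removal disconnects `G`. -/
def IsSeparator (G : SimpleGraph V) (S : Finset V) : Prop :=
  ¬ (G.induce ((↑S : Set V)ᶜ)).Preconnected

/-- `S` is a minimal separator: it is a separator and removing any set of fewer than `|S|`
vertices leaves `G` connected. -/
def IsMinimalSeparator (G : SimpleGraph V) (S : Finset V) : Prop :=
  IsSeparator G S ∧
    ∀ S' : Finset V, S'.card < S.card → (G.induce ((↑S' : Set V)ᶜ)).Connected

/-!
Let `u, w, v` be consecutive vertices of an induced 4-cycle that lie in a minimal separator `S`.
Then `u` and `v` are nonadjacent, and since `G - (S \ {s})` is connected, each `s ∈ S` has a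
neighbour in every component of `G - S`. Shortest `u`–`v` paths through two different components
of `G - S` glue to an induced cycle of length at least 4 through `u` and `v` that misses `w`.
It is either a hole or a second induced 4-cycle sharing the two vertices `u`, `v` with the first.
-/

/-- `p 0, p 1, …, p n` is an induced path of `G`; the values of `p` beyond `n` are irrelevant. -/
def IsInducedPath (G : SimpleGraph V) (p : ℕ → V) (n : ℕ) : Prop :=
  Set.InjOn p {i | i ≤ n} ∧ ∀ i ≤ n, ∀ j ≤ n, (G.Adj (p i) (p j) ↔ j = i + 1 ∨ i = j + 1)

namespace IsInducedPath

variable {G : SimpleGraph V} {p : ℕ → V} {n : ℕ}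

lemma eq_iff (hp : IsInducedPath G p n) {i j : ℕ} (hi : i ≤ n) (hj : j ≤ n) :
    p i = p j ↔ i = j :=
  ⟨fun h => hp.1 hi hj h, congrArg p⟩

lemma adj_iff (hp : IsInducedPath G p n) {i j : ℕ} (hi : i ≤ n) (hj : j ≤ n) :
    G.Adj (p i) (p j) ↔ j = i + 1 ∨ i = j + 1 :=
  hp.2 i hi j hj

lemma map {W : Type*} {H : SimpleGraph W} (hp : IsInducedPath G p n) (φ : G ↪g H) :
    IsInducedPath H (φ ∘ p) n :=
  ⟨φ.injective.comp_injOn hp.1, fun i hi j hj => by simpa using hp.adj_iff hi hj⟩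

end IsInducedPath

namespace SimpleGraph

variable {G : SimpleGraph V} {u v : V}

/-- A shortcut across a chord of a shortest walk would give a shorter one. -/
lemma Walk.isInducedPath_getVert (w : G.Walk u v) (hw : w.length = G.dist u v) :
    IsInducedPath G w.getVert w.length := by
  have no_chord : ∀ i j, i + 1 < j → j ≤ w.length → ¬ G.Adj (w.getVert i) (w.getVert j) := by
    intro i j hij hj hadj
    have := G.dist_le ((w.take i).append (.cons hadj (w.drop j)))
    simp only [Walk.length_append, Walk.length_cons, Walk.take_length, Walk.drop_length] at this
    omega
  refine ⟨(w.isPath_of_length_eq_dist hw).getVert_injOn, fun i hi j hj => ⟨fun hadj => ?_, ?_⟩⟩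
  · rcases lt_trichotomy i j with hij | rfl | hij
    · by_contra
      exact no_chord i j (by omega) hj hadj
    · exact absurd hadj G.irrefl
    · by_contra
      exact no_chord j i (by omega) hi hadj.symm
  · rintro (rfl | rfl)
    · exact w.adj_getVert_succ (by omega)
    · exact (w.adj_getVert_succ (by omega)).symm

lemma Reachable.exists_isInducedPath (h : G.Reachable u v) :
    ∃ n p, IsInducedPath G p n ∧ p 0 = u ∧ p n = v :=
  let ⟨w, hw⟩ := h.exists_walk_length_eq_dist
  ⟨_, _, w.isInducedPath_getVert hw, w.getVert_zero, w.getVert_length⟩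

lemma Walk.exists_isInducedPath_of_support_subset {T : Set V} (w : G.Walk u v)
    (hw : ∀ x ∈ w.support, x ∈ T) :
    ∃ n p, IsInducedPath G p n ∧ p 0 = u ∧ p n = v ∧ ∀ i, p i ∈ T := by
  obtain ⟨n, p, hp, h0, hn⟩ := (w.induce T hw).reachable.exists_isInducedPath
  exact ⟨n, fun i => p i, hp.map (Embedding.induce T), by simp [h0], by simp [hn],
    fun i => (p i).2⟩

lemma Reachable.exists_walk_support_subset {T : Set V} {x y : T}
    (h : (G.induce T).Reachable x y) : ∃ w : G.Walk x y, ∀ z ∈ w.support, z ∈ T := by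
  obtain ⟨w⟩ := h
  refine ⟨w.map (Embedding.induce T).toHom, fun z hz => ?_⟩
  obtain ⟨z, -, rfl⟩ := List.mem_map.1 ((w.support_map _) ▸ hz)
  exact z.2

end SimpleGraph

lemma ZMod.eq_add_one_iff_val {n : ℕ} [NeZero n] (k l : ZMod n) :
    l = k + 1 ↔ l.val = k.val + 1 ∨ (l.val = 0 ∧ k.val + 1 = n) := by
  rw [← (ZMod.val_injective n).eq_iff, ZMod.val_add, ZMod.val_one_eq_one_mod, Nat.add_mod_mod]
  rcases Nat.lt_or_ge (k.val + 1) n with hk | hk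
  · rw [Nat.mod_eq_of_lt hk]
    omega
  · have := l.val_lt
    rw [show k.val + 1 = n by have := k.val_lt; omega, Nat.mod_self]
    omega

section InducedCycle

variable {G : SimpleGraph V}

lemma isInducedCycle_of_nat {n : ℕ} [NeZero n] (c : ℕ → V) (hinj : Set.InjOn c {i | i < n})
    (hadj : ∀ i < n, ∀ j < n, (G.Adj (c i) (c j) ↔
      j = i + 1 ∨ i = j + 1 ∨ (i = 0 ∧ j + 1 = n) ∨ (j = 0 ∧ i + 1 = n))) :
    IsInducedCycle G fun k : ZMod n => c k.val := by
  refine ⟨fun k l h => ZMod.val_injective n (hinj k.val_lt l.val_lt h), fun k l => ?_⟩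
  rw [hadj _ k.val_lt _ l.val_lt, ZMod.eq_add_one_iff_val, ZMod.eq_add_one_iff_val]
  omega

lemma IsInducedPath.isInducedCycle_glue {p q : ℕ → V} {m m' n : ℕ} [NeZero n]
    (hn : m + m' = n) (hp : IsInducedPath G p m) (hq : IsInducedPath G q m')
    (hm : 2 ≤ m) (hm' : 2 ≤ m') (h0 : p 0 = q 0) (hend : p m = q m')
    (hpq : ∀ i j, 0 < i → i < m → 0 < j → j < m' → p i ≠ q j ∧ ¬ G.Adj (p i) (q j)) :
    IsInducedCycle G fun k : ZMod n => if k.val ≤ m then p k.val else q (n - k.val) := by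
  have cross : ∀ i j, i ≤ m → m < j → j < n → p i ≠ q (n - j) ∧
      (G.Adj (p i) (q (n - j)) ↔ (i = 0 ∧ j + 1 = n) ∨ (i = m ∧ j = m + 1)) := by
    intro i j hi hmj hjn
    rcases Nat.eq_zero_or_pos i with rfl | hi0
    · rw [h0, Ne, hq.eq_iff (by omega) (by omega), hq.adj_iff (by omega) (by omega)]
      omega
    rcases hi.lt_or_eq with him | rfl
    · have := hpq i (n - j) hi0 him (by omega) (by omega)
      exact ⟨this.1, by simp only [this.2, false_iff]; omega⟩
    · rw [hend, Ne, hq.eq_iff le_rfl (by omega), hq.adj_iff le_rfl (by omega)]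
      omega
  refine isInducedCycle_of_nat (fun i => if i ≤ m then p i else q (n - i)) ?_ ?_
  · intro i (hi : i < n) j (hj : j < n) hij
    by_cases him : i ≤ m <;> by_cases hjm : j ≤ m <;>
      simp only [him, hjm, if_true, if_false] at hij
    · exact (hp.eq_iff him hjm).1 hij
    · exact absurd hij (cross i j him (by omega) hj).1
    · exact absurd hij.symm (cross j i hjm (by omega) hi).1
    · have := (hq.eq_iff (by omega) (by omega)).1 hij
      omega
  · intro i hi j hj
    by_cases him : i ≤ m <;> by_cases hjm : j ≤ m <;> simp only [him, hjm, if_true, if_false]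
    · rw [hp.adj_iff him hjm]
      omega
    · rw [(cross i j him (by omega) hj).2]
      omega
    · rw [G.adj_comm, (cross j i hjm (by omega) hi).2]
      omega
    · rw [hq.adj_iff (by omega) (by omega)]
      omega

end InducedCycle

namespace SimpleGraph.ConnectedComponent

variable {G : SimpleGraph V} {T : Set V} (C : (G.induce T).ConnectedComponent) {x y : V}

lemma mem_image_supp_of_adj (hx : x ∈ Subtype.val '' C.supp) (hy : y ∈ T) (hxy : G.Adj x y) :
    y ∈ Subtype.val '' C.supp := by
  obtain ⟨x, hxC, rfl⟩ := hx
  refine ⟨⟨y, hy⟩, ?_, rfl⟩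
  rw [mem_supp_iff] at hxC ⊢
  rw [← hxC]
  exact (connectedComponentMk_eq_of_adj (G := G.induce T) (w := ⟨y, hy⟩) hxy).symm

lemma support_subset_image_supp (w : G.Walk x y) (hx : x ∈ Subtype.val '' C.supp)
    (hw : ∀ z ∈ w.support, z ∈ T) : ∀ z ∈ w.support, z ∈ Subtype.val '' C.supp := by
  induction w with
  | nil => simpa using hx
  | cons h w ih =>
    simp only [Walk.support_cons, List.mem_cons, forall_eq_or_imp] at hw ⊢
    exact ⟨hx, ih (C.mem_image_supp_of_adj hx (hw.2 _ w.start_mem_support) h) hw.2⟩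

lemma exists_adj_of_walk {s : V} (hs : s ∉ T) (w : G.Walk x s) (hx : x ∈ Subtype.val '' C.supp)
    (hw : ∀ z ∈ w.support, z ∈ T ∨ z = s) : ∃ z ∈ Subtype.val '' C.supp, G.Adj z s := by
  induction w with
  | nil =>
    obtain ⟨x, -, rfl⟩ := hx
    exact absurd x.2 hs
  | @cons x d s h w ih =>
    by_cases hd : d = s
    · subst hd
      exact ⟨x, hx, h⟩
    have hw' : ∀ z ∈ w.support, z ∈ T ∨ z = s := fun z hz => hw z (by simp [hz])
    have hdT : d ∈ T := (hw' d w.start_mem_support).resolve_right hd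
    exact ih hs (C.mem_image_supp_of_adj hx hdT h) hw'

lemma exists_walk_support_subset (hx : x ∈ Subtype.val '' C.supp)
    (hy : y ∈ Subtype.val '' C.supp) :
    ∃ w : G.Walk x y, ∀ z ∈ w.support, z ∈ Subtype.val '' C.supp := by
  obtain ⟨x, hxC, rfl⟩ := hx
  obtain ⟨y, hyC, rfl⟩ := hy
  rw [mem_supp_iff] at hxC hyC
  obtain ⟨w, hw⟩ := (ConnectedComponent.exact (hxC.trans hyC.symm)).exists_walk_support_subset
  exact ⟨w, C.support_subset_image_supp w ⟨x, (mem_supp_iff C x).2 hxC, rfl⟩ hw⟩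

lemma ne_and_not_adj_of_ne {C' : (G.induce T).ConnectedComponent} (hCC' : C ≠ C')
    (hx : x ∈ Subtype.val '' C.supp) (hy : y ∈ Subtype.val '' C'.supp) :
    x ≠ y ∧ ¬ G.Adj x y := by
  have eq_of_mem : ∀ {z}, z ∈ Subtype.val '' C.supp → z ∈ Subtype.val '' C'.supp → C = C' := by
    rintro _ ⟨z, hz, rfl⟩ ⟨z', hz', hzz'⟩
    exact eq_of_common_vertex hz (Subtype.ext hzz' ▸ hz')
  refine ⟨fun hxy => hCC' (eq_of_mem hx (hxy ▸ hy)), fun hxy => hCC' (eq_of_mem ?_ hy)⟩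
  obtain ⟨y', -, rfl⟩ := hy
  exact C.mem_image_supp_of_adj hx y'.2 hxy

lemma exists_isInducedPath {s t : V} (hst : s ≠ t) (hadj : ¬ G.Adj s t)
    (hs : ∃ x ∈ Subtype.val '' C.supp, G.Adj x s) (ht : ∃ y ∈ Subtype.val '' C.supp, G.Adj y t) :
    ∃ n p, 2 ≤ n ∧ IsInducedPath G p n ∧ p 0 = s ∧ p n = t ∧
      ∀ i, 0 < i → i < n → p i ∈ Subtype.val '' C.supp := by
  obtain ⟨x, hx, hxs⟩ := hs
  obtain ⟨y, hy, hyt⟩ := ht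
  obtain ⟨w, hw⟩ := C.exists_walk_support_subset hx hy
  obtain ⟨n, p, hp, hp0, hpn, hpC⟩ :=
    (Walk.cons hxs.symm (w.concat hyt)).exists_isInducedPath_of_support_subset
      (T := insert s (insert t (Subtype.val '' C.supp))) (by
        intro z hz
        simp only [Walk.support_cons, Walk.support_concat, List.mem_cons, List.mem_append,
          List.mem_nil_iff, or_false] at hz
        rcases hz with rfl | hz | rfl
        · exact .inl rfl
        · exact .inr (.inr (hw z hz))
        · exact .inr (.inl rfl))
  have hn : 2 ≤ n := by
    by_contra! hn
    interval_cases n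
    · exact hst (hp0.symm.trans hpn)
    · exact hadj (hp0 ▸ hpn ▸ (hp.adj_iff (by omega) le_rfl).2 (.inl rfl))
  refine ⟨n, p, hn, hp, hp0, hpn, fun i hi0 hin => ?_⟩
  rcases hpC i with h | h | h
  · exact absurd ((hp.eq_iff (by omega) (Nat.zero_le n)).1 (h.trans hp0.symm)) (by omega)
  · exact absurd ((hp.eq_iff (by omega) le_rfl).1 (h.trans hpn.symm)) (by omega)
  · exact h

end SimpleGraph.ConnectedComponent

section Separator

variable {G : SimpleGraph V} {S : Finset V}

lemma IsSeparator.exists_ne (hS : IsSeparator G S) :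
    ∃ C C' : (G.induce (↑S : Set V)ᶜ).ConnectedComponent, C ≠ C' := by
  simp only [IsSeparator, Preconnected, not_forall] at hS
  obtain ⟨a, b, hab⟩ := hS
  exact ⟨_, _, fun h => hab (ConnectedComponent.exact h)⟩

lemma IsMinimalSeparator.exists_adj_mem (hS : IsMinimalSeparator G S) {s : V} (hs : s ∈ S)
    (C : (G.induce (↑S : Set V)ᶜ).ConnectedComponent) :
    ∃ x ∈ Subtype.val '' C.supp, G.Adj x s := by
  classical
  obtain ⟨⟨c, hc⟩, hcC⟩ := C.nonempty_supp
  have hconn := (hS.2 (S.erase s) (Finset.card_erase_lt_of_mem hs)).preconnected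
  obtain ⟨w, hw⟩ :=
    (hconn ⟨c, fun h => hc (Finset.mem_of_mem_erase h)⟩ ⟨s, by simp⟩).exists_walk_support_subset
  exact C.exists_adj_of_walk (by simpa using hs) w ⟨_, hcC, rfl⟩ fun z hz =>
    or_iff_not_imp_right.2 fun hzs hzS => hw z hz (Finset.mem_erase.2 ⟨hzs, hzS⟩)

lemma IsMinimalSeparator.exists_isInducedCycle (hS : IsMinimalSeparator G S) {u v : V}
    (hu : u ∈ S) (hv : v ∈ S) (huv : u ≠ v) (hadj : ¬ G.Adj u v) :
    ∃ (n : ℕ) (c : ZMod n → V), 4 ≤ n ∧ IsInducedCycle G c ∧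
      u ∈ Set.range c ∧ v ∈ Set.range c ∧ ∀ k, c k ∉ S ∨ c k = u ∨ c k = v := by
  obtain ⟨C, C', hCC'⟩ := hS.1.exists_ne
  obtain ⟨m, p, hm, hp, hp0, hpm, hpC⟩ :=
    C.exists_isInducedPath huv hadj (hS.exists_adj_mem hu C) (hS.exists_adj_mem hv C)
  obtain ⟨m', q, hm', hq, hq0, hqm, hqC⟩ :=
    C'.exists_isInducedPath huv hadj (hS.exists_adj_mem hu C') (hS.exists_adj_mem hv C')
  have outside : ∀ {D : (G.induce (↑S : Set V)ᶜ).ConnectedComponent} {x},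
      x ∈ Subtype.val '' D.supp → x ∉ S := by
    rintro _ _ ⟨x, -, rfl⟩
    exact x.2
  have : NeZero (m + m') := ⟨by omega⟩
  refine ⟨m + m', _, by omega,
    hp.isInducedCycle_glue rfl hq hm hm' (hp0.trans hq0.symm) (hpm.trans hqm.symm)
      fun i j hi hi' hj hj' => C.ne_and_not_adj_of_ne hCC' (hpC i hi hi') (hqC j hj hj'),
    ⟨0, by simp [hp0]⟩, ⟨m, by simp [ZMod.val_natCast_of_lt (show m < m + m' by omega), hpm]⟩,
    fun k => ?_⟩
  have := k.val_lt
  split_ifs with hk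
  · rcases Nat.eq_zero_or_pos k.val with h0 | h0
    · exact .inr (.inl (h0 ▸ hp0))
    rcases hk.lt_or_eq with hkm | hkm
    · exact .inl (outside (hpC _ h0 hkm))
    · exact .inr (.inr (by rw [hkm, hpm]))
  · exact .inl (outside (hqC _ (by omega) (by omega)))

end Separator

lemma exists_consecutive_mem_of_three_le_card (s : Finset (ZMod 4)) (hs : 3 ≤ s.card) :
    ∃ i, i ∈ s ∧ i + 1 ∈ s ∧ i + 2 ∈ s := by
  revert s
  decide

theorem almost_chordal_minimal_separator_C4_general [DecidableEq V]
    (G : SimpleGraph V) (hac : AlmostChordal G) :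
    ¬ ∃ (S : Finset V) (f : ZMod 4 → V),
        IsMinimalSeparator G S ∧ IsInducedCycle G f ∧
        3 ≤ (Finset.univ.filter (fun i : ZMod 4 => f i ∈ S)).card := by
  rintro ⟨S, f, hS : IsMinimalSeparator G S, hf, hcard⟩
  obtain ⟨i, hi, hi1, hi2⟩ := exists_consecutive_mem_of_three_le_card _ hcard
  simp only [Finset.mem_filter, Finset.mem_univ, true_and] at hi hi1 hi2
  have h02 : f i ≠ f (i + 2) := hf.1.ne ((by decide : ∀ j : ZMod 4, j ≠ j + 2) i)
  obtain ⟨n, c, hn, hc, hu, hv, hcS⟩ := hS.exists_isInducedCycle hi hi2 h02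
    (by rw [hf.2]; exact (by decide : ∀ j : ZMod 4, ¬ (j + 2 = j + 1 ∨ j = j + 2 + 1)) i)
  rcases hn.eq_or_lt with rfl | hn
  · refine h02 (hac.2.2 _ _ ⟨f, hf, rfl⟩ ⟨c, hc, rfl⟩ (fun h => ?_) ⟨⟨i, rfl⟩, hu⟩
      ⟨⟨i + 2, rfl⟩, hv⟩)
    obtain ⟨k, hk⟩ := h ▸ Set.mem_range_self (i + 1)
    rcases hcS k with h | h | h <;> rw [hk] at h
    · exact h hi1
    · exact hf.1.ne ((by decide : ∀ j : ZMod 4, j + 1 ≠ j) i) h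
    · exact hf.1.ne ((by decide : ∀ j : ZMod 4, j + 1 ≠ j + 2) i) h
  · exact hac.1 ⟨n, c, hn, hc⟩

/-- In a `k`-connected almost-chordal graph with `k ≥ 5`, no minimal separator contains
three vertices of an induced 4-cycle (STATEMENT 10). -/
theorem almost_chordal_minimal_separator_C4 [Fintype V] [DecidableEq V]
    (k : ℕ) (hk : 5 ≤ k) (G : SimpleGraph V)
    (hconn : KConnected k G) (hac : AlmostChordal G) :
    ¬ ∃ (S : Finset V) (f : ZMod 4 → V),
        IsMinimalSeparator G S ∧ IsInducedCycle G f ∧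
        3 ≤ (Finset.univ.filter (fun i : ZMod 4 => f i ∈ S)).card :=
  almost_chordal_minimal_separator_C4_general G hac
end

section
/- Let G be a k-connected almost-chordal graph and let C = {v_1, v_2, v_3, v_4} be the vertex set of an induced 4-cycle in G with v_1v_2 an edge of this cycle. Then the graph G' = G/v_1v_2 obtained from G by contracting the edge v_1v_2 is still k-connected. -/
open SimpleGraph

variable {V : Type*}

/-! In `G/ab` the contracted vertex replaces both `a` and `b`, so a set `S` of fewer than `k`
vertices of `G/ab` either avoids the contracted vertex, in which case `G - S` is connected and
maps onto `G/ab - S`, or contains it, in which case `G/ab - S` is `G - W` for the set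
`W = S ∪ {a, b}` of at most `k` vertices. It therefore suffices to show that no such `W`
separates `G`. If it did, `k`-connectivity would give every vertex of `W` a neighbour in every
component of `G - W`, and since `G` has no hole, each of two components `A`, `B` contains either
a common neighbour of `a` and `b`, or an induced path `a x y b`. Two common neighbours `x`, `y`
are both adjacent to `c` and `d` (otherwise there is a house or a second induced 4-cycle through
two vertices of `abcd`), and then `x a y c` and `x b y d` are induced 4-cycles sharing `x` and
`y`; a common neighbour and an induced path form a house; two induced paths give induced
4-cycles sharing `a` and `b`. -/

section

variable {U : Type*} {G : SimpleGraph V} {H : SimpleGraph U}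

lemma zmod_four_cases : ∀ i : ZMod 4, i = 0 ∨ i = 1 ∨ i = 2 ∨ i = 3 := by decide

structure IsC4 (G : SimpleGraph V) (a b c d : V) : Prop where
  adj_ab : G.Adj a b
  adj_bc : G.Adj b c
  adj_cd : G.Adj c d
  adj_da : G.Adj d a
  not_adj_ac : ¬G.Adj a c
  not_adj_bd : ¬G.Adj b d
  ne_ac : a ≠ c
  ne_bd : b ≠ d

namespace IsC4

variable {a b c d : V}

lemma rotate (h : IsC4 G a b c d) : IsC4 G d a b c :=
  ⟨h.adj_da, h.adj_ab, h.adj_bc, h.adj_cd, fun h' => h.not_adj_bd h'.symm, h.not_adj_ac,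
    h.ne_bd.symm, h.ne_ac⟩

lemma reflect (h : IsC4 G a b c d) : IsC4 G b a d c :=
  ⟨h.adj_ab.symm, h.adj_da.symm, h.adj_cd.symm, h.adj_bc.symm, h.not_adj_bd, h.not_adj_ac,
    h.ne_bd, h.ne_ac⟩

lemma map (φ : G ↪g H) (h : IsC4 G a b c d) : IsC4 H (φ a) (φ b) (φ c) (φ d) :=
  ⟨φ.map_adj_iff.2 h.adj_ab, φ.map_adj_iff.2 h.adj_bc, φ.map_adj_iff.2 h.adj_cd,
    φ.map_adj_iff.2 h.adj_da, fun h' => h.not_adj_ac (φ.map_adj_iff.1 h'),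
    fun h' => h.not_adj_bd (φ.map_adj_iff.1 h'), φ.injective.ne h.ne_ac, φ.injective.ne h.ne_bd⟩

lemma isInducedCycle (h : IsC4 G a b c d) : IsInducedCycle G (n := 4) ![a, b, c, d] := by
  have hab := h.adj_ab.ne
  have hbc := h.adj_bc.ne
  have hcd := h.adj_cd.ne
  have hda := h.adj_da.ne
  have hac := h.ne_ac
  have hbd := h.ne_bd
  refine ⟨fun i j hij => ?_, fun i j => ?_⟩
  · rcases zmod_four_cases i with rfl | rfl | rfl | rfl <;>
      rcases zmod_four_cases j with rfl | rfl | rfl | rfl <;> simp_all [eq_comm]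
  · rcases zmod_four_cases i with rfl | rfl | rfl | rfl <;>
      rcases zmod_four_cases j with rfl | rfl | rfl | rfl <;>
      simp [h.adj_ab, h.adj_bc, h.adj_cd, h.adj_da, h.adj_ab.symm, h.adj_bc.symm, h.adj_cd.symm,
        h.adj_da.symm, h.not_adj_ac, h.not_adj_bd, G.adj_comm c a, G.adj_comm d b,
        (by decide : (3 : ZMod 4) + 1 = 0)] <;> decide

lemma isC4Set (h : IsC4 G a b c d) : IsC4Set G {a, b, c, d} :=
  ⟨_, h.isInducedCycle, by
    change _ = Set.range (![a, b, c, d] : Fin 4 → V)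
    ext; simp; tauto⟩

end IsC4

lemma IsInducedCycle.isC4 {f : ZMod 4 → V} (hf : IsInducedCycle G f) :
    IsC4 G (f 0) (f 1) (f 2) (f 3) where
  adj_ab := (hf.2 0 1).2 (by decide)
  adj_bc := (hf.2 1 2).2 (by decide)
  adj_cd := (hf.2 2 3).2 (by decide)
  adj_da := (hf.2 3 0).2 (by decide)
  not_adj_ac h := absurd ((hf.2 0 2).1 h) (by decide)
  not_adj_bd h := absurd ((hf.2 1 3).1 h) (by decide)
  ne_ac := hf.1.ne (by decide)
  ne_bd := hf.1.ne (by decide)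

lemma IsInducedCycle.map (φ : G ↪g H) {n : ℕ} {f : ZMod n → V} (hf : IsInducedCycle G f) :
    IsInducedCycle H (φ ∘ f) :=
  ⟨φ.injective.comp hf.1, fun i j => φ.map_adj_iff.trans (hf.2 i j)⟩

lemma HasHole.map (φ : G ↪g H) : HasHole G → HasHole H
  | ⟨n, f, hn, hf⟩ => ⟨n, φ ∘ f, hn, hf.map φ⟩

lemma hasHouse_of_isC4 {a b c d e : V} (h : IsC4 G a b c d) (hea : G.Adj e a) (heb : G.Adj e b)
    (hec : ¬G.Adj e c) (hed : ¬G.Adj e d) : HasHouse G := by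
  refine ⟨_, e, h.isInducedCycle, fun i => ?_, hea, heb, hec, hed⟩
  rcases zmod_four_cases i with rfl | rfl | rfl | rfl
  · exact hea.ne
  · exact heb.ne
  · rintro rfl; exact h.not_adj_ac hea.symm
  · rintro rfl; exact h.not_adj_bd heb.symm

namespace AlmostChordal

variable {a b c d a' b' c' d' : V}

lemma eq_of_isC4 (hac : AlmostChordal G) (h₁ : IsC4 G a b c d) (h₂ : IsC4 G a' b' c' d')
    {p q : V} (hp : p ∈ ({a, b, c, d} ∩ {a', b', c', d'} : Set V))
    (hq : q ∈ ({a, b, c, d} ∩ {a', b', c', d'} : Set V)) (hpq : p ≠ q) :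
    ({a, b, c, d} : Set V) = {a', b', c', d'} := by
  by_contra hne
  exact hpq (hac.2.2 _ _ h₁.isC4Set h₂.isC4Set hne hp hq)

lemma adj_fourth_of_adj_three (hac : AlmostChordal G) (h : IsC4 G a b c d) {x : V}
    (hxa : G.Adj x a) (hxb : G.Adj x b) (hxc : G.Adj x c) : G.Adj x d := by
  by_contra hxd
  have hxd' : x ≠ d := by rintro rfl; exact h.not_adj_bd hxb.symm
  have h' : IsC4 G a x c d := ⟨hxa.symm, hxc, h.adj_cd, h.adj_da, h.not_adj_ac, hxd, h.ne_ac, hxd'⟩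
  have hb : b ∈ ({a, x, c, d} : Set V) :=
    hac.eq_of_isC4 h h' (p := a) (q := c) (by simp) (by simp) h.ne_ac ▸ (by simp)
  simp only [Set.mem_insert_iff, Set.mem_singleton_iff] at hb
  rcases hb with hb | hb | hb | hb
  exacts [h.adj_ab.ne hb.symm, hxb.ne hb.symm, h.adj_bc.ne hb, h.ne_bd hb]

lemma adj_of_common_neighbor (hac : AlmostChordal G) (h : IsC4 G a b c d) {x : V}
    (hxa : G.Adj x a) (hxb : G.Adj x b) : G.Adj x c ∧ G.Adj x d := by
  by_cases hxc : G.Adj x c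
  · exact ⟨hxc, hac.adj_fourth_of_adj_three h hxa hxb hxc⟩
  by_cases hxd : G.Adj x d
  · exact absurd (hac.adj_fourth_of_adj_three h.reflect hxb hxa hxd) hxc
  exact (hac.2.1 (hasHouse_of_isC4 h.reflect hxb hxa hxd hxc)).elim

end AlmostChordal

def ShortBypass (G : SimpleGraph V) (u v : V) (C : Set V) : Prop :=
  (∃ x ∈ C, G.Adj u x ∧ G.Adj x v) ∨ ∃ x ∈ C, ∃ y ∈ C, IsC4 G u x y v

lemma AlmostChordal.false_of_shortBypass {a b c d : V} (hac : AlmostChordal G)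
    (h : IsC4 G a b c d) {A B : Set V} (hA : ShortBypass G a b A) (hB : ShortBypass G a b B)
    (hAB : ∀ x ∈ A, ∀ y ∈ B, x ≠ y ∧ ¬G.Adj x y) : False := by
  rcases hA with ⟨x, hx, hax, hxb⟩ | ⟨x, hx, x', hx', hx4⟩ <;>
    rcases hB with ⟨y, hy, hay, hyb⟩ | ⟨y, hy, y', hy', hy4⟩
  · obtain ⟨hxc, hxd⟩ := hac.adj_of_common_neighbor h hax.symm hxb
    obtain ⟨hyc, hyd⟩ := hac.adj_of_common_neighbor h hay.symm hyb
    obtain ⟨hxy, hnxy⟩ := hAB x hx y hy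
    have h₁ : IsC4 G x a y c := ⟨hax.symm, hay, hyc, hxc.symm, hnxy, h.not_adj_ac, hxy, h.ne_ac⟩
    have h₂ : IsC4 G x b y d := ⟨hxb, hyb.symm, hyd, hxd.symm, hnxy, h.not_adj_bd, hxy, h.ne_bd⟩
    have ha : a ∈ ({x, b, y, d} : Set V) :=
      hac.eq_of_isC4 h₁ h₂ (p := x) (q := y) (by simp) (by simp) hxy ▸ (by simp)
    simp only [Set.mem_insert_iff, Set.mem_singleton_iff] at ha
    rcases ha with ha | ha | ha | ha
    exacts [hax.ne ha, h.adj_ab.ne ha, hay.ne ha, h.adj_da.ne ha.symm]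
  · exact hac.2.1 (hasHouse_of_isC4 hy4.rotate hxb hax.symm (hAB x hx y hy).2
      (hAB x hx y' hy').2)
  · exact hac.2.1 (hasHouse_of_isC4 hx4.rotate hyb hay.symm
      (fun h' => (hAB x hx y hy).2 h'.symm) (fun h' => (hAB x' hx' y hy).2 h'.symm))
  · have hxs : x ∈ ({a, y, y', b} : Set V) :=
      hac.eq_of_isC4 hx4 hy4 (p := a) (q := b) (by simp) (by simp) h.adj_ab.ne ▸ (by simp)
    simp only [Set.mem_insert_iff, Set.mem_singleton_iff] at hxs
    rcases hxs with hxs | hxs | hxs | hxs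
    exacts [hx4.adj_ab.ne hxs.symm, (hAB x hx y hy).1 hxs, (hAB x hx y' hy').1 hxs, hx4.ne_bd hxs]

lemma isInducedCycle_of_adj_iff {q : ℕ → V} {L : ℕ} (hL : 1 ≤ L)
    (hinj : ∀ i ≤ L, ∀ j ≤ L, q i = q j → i = j)
    (hadj : ∀ i j, i < j → j ≤ L → (G.Adj (q i) (q j) ↔ j = i + 1 ∨ (i = 0 ∧ j = L))) :
    IsInducedCycle G (fun i : ZMod (L + 1) => q i.val) := by
  have hsucc (i j : Fin (L + 1)) : j = i + 1 ↔ (j.val = i.val + 1 ∨ (i.val = L ∧ j.val = 0)) := by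
    rw [Fin.ext_iff, Fin.val_add_one]
    split_ifs with h <;> simp only [Fin.ext_iff, Fin.val_last] at h <;> omega
  have hlt (i j : Fin (L + 1)) (hij : i < j) : G.Adj (q i) (q j) ↔ (j = i + 1 ∨ i = j + 1) := by
    rw [hadj i j hij (Nat.lt_succ_iff.mp j.isLt), hsucc, hsucc]
    rw [Fin.lt_def] at hij
    omega
  have hcyc (i j : Fin (L + 1)) : G.Adj (q i) (q j) ↔ (j = i + 1 ∨ i = j + 1) := by
    rcases lt_trichotomy i j with h | rfl | h
    · exact hlt i j h
    · simp only [SimpleGraph.irrefl, false_iff, hsucc]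
      omega
    · rw [G.adj_comm, or_comm]
      exact hlt j i h
  exact ⟨fun i j h => Fin.ext (hinj _ (Nat.lt_succ_iff.mp i.isLt) _ (Nat.lt_succ_iff.mp j.isLt) h),
    hcyc⟩

namespace SimpleGraph.Walk

lemma not_adj_getVert_of_length_eq_dist {u v : V} {p : G.Walk u v} (hp : p.length = G.dist u v)
    {i j : ℕ} (hij : i + 2 ≤ j) (hj : j ≤ p.length) : ¬G.Adj (p.getVert i) (p.getVert j) := by
  intro h
  have := G.dist_le ((p.take i).append (cons h (p.drop j)))
  simp only [length_append, length_cons, take_length, drop_length] at this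
  omega

lemma adj_getVert_iff_of_length_eq_dist {u v : V} (huv : G.Adj u v)
    {p : (G.deleteEdges {s(u, v)}).Walk u v} (hp : p.length = (G.deleteEdges {s(u, v)}).dist u v)
    {i j : ℕ} (hij : i < j) (hj : j ≤ p.length) :
    G.Adj (p.getVert i) (p.getVert j) ↔ j = i + 1 ∨ (i = 0 ∧ j = p.length) := by
  have hinj := (p.isPath_of_length_eq_dist hp).getVert_injOn
  constructor
  · intro h
    by_contra hne
    refine not_adj_getVert_of_length_eq_dist hp (i := i) (j := j) (by omega) hj ?_
    refine deleteEdges_adj.2 ⟨h, fun he => ?_⟩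
    rw [Set.mem_singleton_iff, Sym2.eq_iff] at he
    rcases he with ⟨hi, hj'⟩ | ⟨hi, -⟩
    · exact hne (Or.inr ⟨hinj (by simp; omega) (by simp) (hi.trans p.getVert_zero.symm),
        hinj (by simpa) (by simp) (hj'.trans p.getVert_length.symm)⟩)
    · have := hinj (by simp; omega) (by simp) (hi.trans p.getVert_length.symm)
      omega
  · rintro (rfl | ⟨rfl, rfl⟩)
    · exact (deleteEdges_adj.1 (p.adj_getVert_succ (by omega))).1
    · simpa using huv

end SimpleGraph.Walk

lemma exists_common_neighbor_or_isC4 (hhole : ¬HasHole G) {u v : V} (huv : G.Adj u v)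
    (h : (G.deleteEdges {s(u, v)}).Reachable u v) :
    (∃ x, G.Adj u x ∧ G.Adj x v) ∨ ∃ x y, IsC4 G u x y v := by
  -- a shortest `u`-`v` path avoiding the edge `uv` closes up with `uv` to an induced cycle
  obtain ⟨p, hp⟩ := h.exists_walk_length_eq_dist
  have hadj {i j : ℕ} (hij : i < j) (hj : j ≤ p.length) :=
    Walk.adj_getVert_iff_of_length_eq_dist huv hp hij hj
  have hinj := (p.isPath_of_length_eq_dist hp).getVert_injOn
  have hu : p.getVert 0 = u := p.getVert_zero
  have hv : p.getVert p.length = v := p.getVert_length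
  have h2 : 2 ≤ p.length := by
    by_contra! hlt
    interval_cases hL : p.length
    · exact huv.ne (hu.symm.trans hv)
    · have := p.adj_getVert_succ (i := 0) (by omega)
      rw [hu, hv] at this
      simp at this
  have hne {i j : ℕ} (hij : i < j) (hj : j ≤ p.length) : p.getVert i ≠ p.getVert j :=
    fun h => hij.ne (hinj (by simp; omega) (by simpa) h)
  obtain hL | hL | hL : p.length = 2 ∨ p.length = 3 ∨ 4 ≤ p.length := by omega
  · have h01 := (hadj (i := 0) (j := 1) (by omega) (by omega)).2 (by omega)
    have h12 := (hadj (i := 1) (j := 2) (by omega) (by omega)).2 (by omega)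
    rw [hu] at h01
    rw [← hL, hv] at h12
    exact Or.inl ⟨_, h01, h12⟩
  · have h01 := (hadj (i := 0) (j := 1) (by omega) (by omega)).2 (by omega)
    have h12 := (hadj (i := 1) (j := 2) (by omega) (by omega)).2 (by omega)
    have h23 := (hadj (i := 2) (j := 3) (by omega) (by omega)).2 (by omega)
    have h02 := (hadj (i := 0) (j := 2) (by omega) (by omega)).not.2 (by omega)
    have h13 := (hadj (i := 1) (j := 3) (by omega) (by omega)).not.2 (by omega)
    have hne02 := hne (i := 0) (j := 2) (by omega) (by omega)
    have hne13 := hne (i := 1) (j := 3) (by omega) (by omega)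
    rw [hu] at h01 h02 hne02
    rw [← hL, hv] at h23 h13 hne13
    exact Or.inr ⟨_, _, ⟨h01, h12, h23, huv.symm, h02, h13, hne02, hne13⟩⟩
  · exact (hhole ⟨p.length + 1, _, by omega, isInducedCycle_of_adj_iff (q := p.getVert) (by omega)
      (fun i hi j hj h => hinj hi hj h) (fun i j hij hj => hadj hij hj)⟩).elim

lemma shortBypass_of_reachable (hhole : ¬HasHole G) {u v : V} (huv : G.Adj u v) {C : Set V}
    (hu : u ∉ C) (hv : v ∉ C) {x y : V} (hx : x ∈ C) (hy : y ∈ C) (hux : G.Adj u x)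
    (hyv : G.Adj y v) (hxy : (G.induce C).Reachable ⟨x, hx⟩ ⟨y, hy⟩) : ShortBypass G u v C := by
  set Ω : Set V := insert u (insert v C)
  let ι (z : C) : Ω := ⟨z, Set.mem_insert_of_mem _ (Set.mem_insert_of_mem _ z.2)⟩
  let u' : Ω := ⟨u, Set.mem_insert _ _⟩
  let v' : Ω := ⟨v, Set.mem_insert_of_mem _ (Set.mem_insert _ _)⟩
  have hmem (z : Ω) (hzu : z ≠ u') (hzv : z ≠ v') : z.1 ∈ C := by
    rcases z.2 with h | h | h
    exacts [absurd (Subtype.ext h) hzu, absurd (Subtype.ext h) hzv, h]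
  set K := (G.induce Ω).deleteEdges {s(u', v')}
  have hK {z w : Ω} (hzw : G.Adj z w) (hz : z.1 ∈ C ∨ w.1 ∈ C) : K.Adj z w := by
    refine deleteEdges_adj.2 ⟨hzw, fun he => ?_⟩
    rw [Set.mem_singleton_iff, Sym2.eq_iff] at he
    rcases he with ⟨rfl, rfl⟩ | ⟨rfl, rfl⟩ <;> rcases hz with hz | hz
    exacts [hu hz, hv hz, hv hz, hu hz]
  let φ : G.induce C →g K := ⟨ι, fun {z _} hzw => hK hzw (.inl z.2)⟩
  have hreach : K.Reachable u' v' :=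
    (hK (w := ι ⟨x, hx⟩) hux (.inr hx)).reachable.trans
      ((hxy.map φ).trans (hK (z := ι ⟨y, hy⟩) hyv (.inl hy)).reachable)
  rcases exists_common_neighbor_or_isC4 (mt (HasHole.map (Embedding.induce Ω)) hhole)
    (show (G.induce Ω).Adj u' v' from huv) hreach with ⟨z, huz, hzv⟩ | ⟨z, w, h⟩
  · exact Or.inl ⟨z, hmem z huz.ne.symm hzv.ne, huz, hzv⟩
  · exact Or.inr ⟨z, hmem z h.adj_ab.ne.symm h.ne_bd, w, hmem w h.ne_ac.symm h.adj_cd.ne,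
      h.map (Embedding.induce Ω)⟩

lemma reachable_induce_setOf_reachable {s : Set V} {x y : s} (hxy : (G.induce s).Reachable x y) :
    (G.induce {z | ∃ hz : z ∈ s, (G.induce s).Reachable x ⟨z, hz⟩}).Reachable
      ⟨x, x.2, .rfl⟩ ⟨y, y.2, hxy⟩ := by
  rw [reachable_iff_reflTransGen] at hxy
  induction hxy with
  | refl => rfl
  | tail hxz hzw ih =>
    exact (ih ((reachable_iff_reflTransGen _ _).2 hxz)).trans (Adj.reachable (G := G.induce _) hzw)

section KConnected

variable [Fintype V] {k : ℕ}

lemma KConnected.add_two_le_card (hG : KConnected k G) {a b : V} (hab : a ≠ b)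
    (hnadj : ¬G.Adj a b) : k + 2 ≤ Fintype.card V := by
  classical
  by_contra! hcard
  set S : Finset V := (Finset.univ.erase a).erase b
  have hS : S.card < k := by
    have := hG.1
    have := Fintype.one_lt_card_iff.2 ⟨a, b, hab⟩
    rw [Finset.card_erase_of_mem (by simpa using hab.symm), Finset.card_erase_of_mem
      (Finset.mem_univ _), Finset.card_univ]
    omega
  obtain ⟨z, hz⟩ := ((hG.2 S hS).preconnected ⟨a, by simp [S]⟩ ⟨b, by simp [S]⟩)
    |>.nonempty_neighborSet_left (by simpa using hab)
  have hz' : z.1 = a ∨ z.1 = b := by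
    by_contra! hne
    exact z.2 (by simp [S, hne.1, hne.2])
  rcases hz' with h | h
  · exact hz.ne h.symm
  · exact hnadj (h ▸ hz)

lemma KConnected.exists_adj_reachable (hG : KConnected k G) {W : Finset V} (hW : W.card ≤ k)
    {w : V} (hw : w ∈ W) (hsep : ¬(G.induce (↑W : Set V)ᶜ).Preconnected)
    (x : ((↑W : Set V)ᶜ : Set V)) :
    ∃ y : ((↑W : Set V)ᶜ : Set V), G.Adj w y ∧ (G.induce (↑W : Set V)ᶜ).Reachable x y := by
  classical
  by_contra! hno
  refine hsep fun y z => ?_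
  suffices h : ∀ z, (G.induce (↑W : Set V)ᶜ).Reachable x z from (h y).symm.trans (h z)
  intro z
  by_contra hxz
  have hcard : (W.erase w).card < k := by
    rw [Finset.card_erase_of_mem hw]
    have := Finset.card_pos.2 ⟨w, hw⟩
    omega
  have hsub (t : ((↑W : Set V)ᶜ : Set V)) : t.1 ∈ (↑(W.erase w) : Set V)ᶜ :=
    fun h => t.2 (Finset.mem_of_mem_erase h)
  obtain ⟨p⟩ := (hG.2 _ hcard).preconnected ⟨x, hsub x⟩ ⟨z, hsub z⟩
  obtain ⟨d, -, ⟨hd, hxd⟩, hd'⟩ := p.exists_boundary_dart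
    {t | ∃ ht : t.1 ∈ (↑W : Set V)ᶜ, (G.induce _).Reachable x ⟨t, ht⟩} ⟨x.2, .rfl⟩
    fun ⟨_, h⟩ => hxz h
  by_cases hdw : d.snd.1 = w
  · have hwd : G.Adj d.snd.1 d.fst.1 := d.adj.symm
    rw [hdw] at hwd
    exact hno ⟨d.fst.1, hd⟩ hwd hxd
  · have hd2 : d.snd.1 ∈ (↑W : Set V)ᶜ := by simpa [hdw] using d.snd.2
    exact hd' ⟨hd2, hxd.trans (Adj.reachable (G := G.induce _) d.adj)⟩

end KConnected

lemma SimpleGraph.Preconnected.of_surjective_adj_or_eq (hG : G.Preconnected)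
    {f : V → U} (hf : f.Surjective) (hadj : ∀ a b, G.Adj a b → f a = f b ∨ H.Adj (f a) (f b)) :
    H.Preconnected := by
  intro x y
  obtain ⟨a, rfl⟩ := hf x
  obtain ⟨b, rfl⟩ := hf y
  refine (reachable_iff_reflTransGen _ _).2 (((reachable_iff_reflTransGen _ _).1 (hG a b)).lift' f
    fun a b h => ?_)
  rcases hadj a b h with e | h'
  · show Relation.ReflTransGen H.Adj (f a) (f b)
    rw [e]
  · exact .single h'

def contractEdgeMap [DecidableEq V] {u v : V} (huv : u ≠ v) (x : V) : {x : V // x ≠ v} :=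
  if hx : x = v then ⟨u, huv⟩ else ⟨x, hx⟩

lemma contractEdgeMap_eq_or_adj [DecidableEq V] {u v : V} (huv : u ≠ v) {a b : V}
    (hab : G.Adj a b) :
    contractEdgeMap huv a = contractEdgeMap huv b ∨
      (contractEdge G u v).Adj (contractEdgeMap huv a) (contractEdgeMap huv b) := by
  have hba := hab.symm
  unfold contractEdgeMap
  split_ifs with ha hb hb
  · exact absurd (ha.trans hb.symm) hab.ne
  all_goals simp only [contractEdge, fromRel_adj, ne_eq, Subtype.mk.injEq]; subst_vars; tauto

lemma preconnected_induce_contractEdge [DecidableEq V] {u v : V} (huv : u ≠ v)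
    {S : Finset {x : V // x ≠ v}} {T : Set V}
    (hT : ∀ x, x ∈ T ↔ contractEdgeMap huv x ∈ S) (hG : (G.induce Tᶜ).Preconnected) :
    ((contractEdge G u v).induce (↑S : Set {x : V // x ≠ v})ᶜ).Preconnected := by
  have hπ (x : {x : V // x ≠ v}) : contractEdgeMap huv x = x := dif_neg x.2
  refine hG.of_surjective_adj_or_eq (f := fun x => ⟨contractEdgeMap huv x, (hT x).not.1 x.2⟩)
    (fun y => ⟨⟨y.1, (hT y.1).not.2 ((hπ y.1).symm ▸ y.2)⟩, Subtype.ext (hπ y.1)⟩)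
    fun a b hab => ?_
  rcases contractEdgeMap_eq_or_adj huv hab with e | h
  exacts [.inl (Subtype.ext e), .inr h]

theorem AlmostChordal.preconnected_induce_compl [Fintype V] {k : ℕ} {a b c d : V}
    (hac : AlmostChordal G) (hG : KConnected k G) (h : IsC4 G a b c d) {W : Finset V}
    (hW : W.card ≤ k) (ha : a ∈ W) (hb : b ∈ W) : (G.induce (↑W : Set V)ᶜ).Preconnected := by
  by_contra hsep
  set K := G.induce (↑W : Set V)ᶜ
  let comp (x : ((↑W : Set V)ᶜ : Set V)) : Set V :=
    {z | ∃ hz : z ∈ (↑W : Set V)ᶜ, K.Reachable x ⟨z, hz⟩}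
  have hbypass (x) : ShortBypass G a b (comp x) := by
    obtain ⟨ya, hya, hxya⟩ := hG.exists_adj_reachable hW ha hsep x
    obtain ⟨yb, hyb, hxyb⟩ := hG.exists_adj_reachable hW hb hsep x
    exact shortBypass_of_reachable (C := comp x) hac.1 h.adj_ab (fun ⟨h, _⟩ => h ha)
      (fun ⟨h, _⟩ => h hb) ⟨ya.2, hxya⟩ ⟨yb.2, hxyb⟩ hya hyb.symm
      ((reachable_induce_setOf_reachable hxya).symm.trans (reachable_induce_setOf_reachable hxyb))
  obtain ⟨x, y, hxy⟩ : ∃ x y, ¬K.Reachable x y := by simpa [Preconnected] using hsep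
  refine hac.false_of_shortBypass h (hbypass x) (hbypass y) ?_
  rintro z ⟨hz, hxz⟩ w ⟨hw, hyw⟩
  refine ⟨?_, fun hzw =>
    hxy (hxz.trans ((show K.Adj ⟨z, hz⟩ ⟨w, hw⟩ from hzw).reachable.trans hyw.symm))⟩
  rintro rfl
  exact hxy (hxz.trans hyw.symm)

end

/-- Contracting an edge of an induced 4-cycle of a `k`-connected almost-chordal graph
preserves `k`-connectivity (STATEMENT 11). -/
theorem almost_chordal_contraction_connectivity [Fintype V] [DecidableEq V]
    (k : ℕ) (G : SimpleGraph V)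
    (hconn : KConnected k G) (hac : AlmostChordal G)
    (f : ZMod 4 → V) (hf : IsInducedCycle G f) :
    KConnected k (contractEdge G (f 0) (f 1)) := by
  have hC := hf.isC4
  have huv : f 0 ≠ f 1 := hC.adj_ab.ne
  have hcard : Fintype.card {x // x ≠ f 1} = Fintype.card V - 1 := Set.card_ne_eq (f 1)
  have hk := hconn.add_two_le_card hC.ne_ac hC.not_adj_ac
  refine ⟨by omega, fun S hS => (connected_iff _).2 ⟨?_, ?_⟩⟩
  · by_cases hu : ⟨f 0, huv⟩ ∈ S
    · set T := insert (f 1) (S.map (.subtype _))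
      have hT : T.card ≤ k := (Finset.card_insert_le _ _).trans (by simp; omega)
      refine preconnected_induce_contractEdge huv (T := ↑T) (fun x => ?_)
        (hac.preconnected_induce_compl hconn hC hT
          (Finset.mem_insert_of_mem (Finset.mem_map_of_mem _ hu)) (Finset.mem_insert_self _ _))
      by_cases hx : x = f 1 <;> simp [T, contractEdgeMap, hx, hu]
    · refine preconnected_induce_contractEdge huv (T := ↑(S.map (.subtype _))) (fun x => ?_)
        (hconn.2 _ (by simpa)).preconnected
      by_cases hx : x = f 1 <;> simp [contractEdgeMap, hx, hu]
  · obtain ⟨x, -, hx⟩ := Finset.exists_mem_notMem_of_card_lt_card (s := S) (t := .univ)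
      (by rw [Finset.card_univ]; omega)
    exact ⟨x, hx⟩
end
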